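/- arXiv:0802.0527 — 4 statements merged into one kernel-verified Lean document; each statement's English description precedes it below -/
import Mathlib

section
/- Let n ≥ 1, let A : ℝ → ℝ be differentiable with A(t) ≠ 0 for all t, and let U, τ : ZMod n → ℝ → ℝ² be differentiable families satisfying the edge-evolution law τᵢ'(t) = U_{i+1}(t) − U_{i−1}(t) for all i and t. Define ζ(t) = (1/A(t)) ∑ᵢ ⟨Uᵢ(t), τᵢ(t)⟩. Then for all t, (1/A(t)) ∑ᵢ ⟨Uᵢ'(t), τᵢ(t)⟩ = ζ'(t) + (A'(t)/A(t)) · ζ(t). -/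
open scoped RealInnerProductSpace

/- The vorticity is ζ = S / A with S(t) = ∑ᵢ ⟨Uᵢ, τᵢ⟩, so the quotient rule gives
ζ' + (A'/A) ζ = S'/A. By the product rule S' = ∑ᵢ ⟨Uᵢ', τᵢ⟩ + ∑ᵢ ⟨Uᵢ, U_{i+1} − U_{i−1}⟩, and the
last sum vanishes because re-indexing i ↦ i + 1 turns ∑ᵢ ⟨Uᵢ, U_{i+1}⟩ into ∑ᵢ ⟨U_{i−1}, Uᵢ⟩. -/

theorem sum_inner_shift_sub_shift_eq_zero {G E : Type*} [AddCommGroup G] [Fintype G]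
    [NormedAddCommGroup E] [InnerProductSpace ℝ E] (u : G → E) (g : G) :
    ∑ i, ⟪u i, u (i + g) - u (i - g)⟫ = 0 := by
  have hreindex : ∑ i, ⟪u i, u (i + g)⟫ = ∑ i, ⟪u (i - g), u i⟫ := by
    rw [← Equiv.sum_comp (Equiv.addRight g) (fun j => ⟪u (j - g), u j⟫)]
    simp only [Equiv.coe_addRight, add_sub_cancel_right]
  simp only [inner_sub_right, Finset.sum_sub_distrib, hreindex, real_inner_comm, sub_self]

theorem hasDerivAt_sum_inner_of_deriv_eq_shift_sub {G E : Type*} [AddCommGroup G] [Fintype G]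
    [NormedAddCommGroup E] [InnerProductSpace ℝ E] (U τ : G → ℝ → E) (g : G) {t : ℝ}
    (hU : ∀ i, DifferentiableAt ℝ (U i) t) (hτ : ∀ i, DifferentiableAt ℝ (τ i) t)
    (hlaw : ∀ i, deriv (τ i) t = U (i + g) t - U (i - g) t) :
    HasDerivAt (fun s => ∑ i, ⟪U i s, τ i s⟫) (∑ i, ⟪deriv (U i) t, τ i t⟫) t := by
  have hprod : HasDerivAt (fun s => ∑ i, ⟪U i s, τ i s⟫)
      (∑ i, (⟪U i t, deriv (τ i) t⟫ + ⟪deriv (U i) t, τ i t⟫)) t :=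
    HasDerivAt.fun_sum fun i _ => (hU i).hasDerivAt.inner ℝ (hτ i).hasDerivAt
  simpa only [Finset.sum_add_distrib, hlaw, sum_inner_shift_sub_shift_eq_zero, zero_add]
    using hprod

theorem deriv_one_div_mul_add_div_mul {A S : ℝ → ℝ} {A' S' t : ℝ}
    (hA : HasDerivAt A A' t) (hS : HasDerivAt S S' t) (hA0 : A t ≠ 0) :
    deriv (fun s => 1 / A s * S s) t + A' / A t * (1 / A t * S t) = 1 / A t * S' := by
  have hinv : HasDerivAt (fun s => 1 / A s) (-A' / A t ^ 2) t := by
    simpa only [one_div] using hA.fun_inv hA0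
  rw [(hinv.fun_mul hS).deriv]
  field_simp
  ring

/-- Semi-discrete vorticity identity: if the tangential edge vectors evolve as
`τᵢ' = U_{i+1} - U_{i-1}`, then `(1/A) ∑ ⟪Uᵢ', τᵢ⟫ = ζ' + (A'/A) ζ` where
`ζ = (1/A) ∑ ⟪Uᵢ, τᵢ⟫`. -/
theorem semi_discrete_vorticity (n : ℕ) [NeZero n]
    (A : ℝ → ℝ) (hA : Differentiable ℝ A) (hA0 : ∀ t, A t ≠ 0)
    (U τ : ZMod n → ℝ → EuclideanSpace ℝ (Fin 2))
    (hU : ∀ i, Differentiable ℝ (U i)) (hτ : ∀ i, Differentiable ℝ (τ i))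
    (hlaw : ∀ i t, deriv (τ i) t = U (i + 1) t - U (i - 1) t) :
    ∀ t : ℝ,
      (1 / A t) * ∑ i : ZMod n, ⟪deriv (U i) t, τ i t⟫ =
        deriv (fun s => (1 / A s) * ∑ i : ZMod n, ⟪U i s, τ i s⟫) t +
          (deriv A t / A t) * ((1 / A t) * ∑ i : ZMod n, ⟪U i t, τ i t⟫) := by
  intro t
  have hcirc := hasDerivAt_sum_inner_of_deriv_eq_shift_sub U τ 1 (fun i => hU i t)
    (fun i => hτ i t) (fun i => hlaw i t)
  exact (deriv_one_div_mul_add_div_mul (hA t).hasDerivAt hcirc (hA0 t)).symm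
end

section
/- Let n ≥ 1, let A : ℝ → ℝ be differentiable with A(t) ≠ 0 for all t, let J : ℝ² → ℝ² be the rotation J(u₁,u₂) = (u₂, −u₁), and let U, N : ZMod n → ℝ → ℝ² be differentiable families satisfying the normal-evolution law Nᵢ'(t) = J(U_{i+1}(t)) − J(U_{i−1}(t)) for all i and t. Define δ̂(t) = (1/A(t)) ∑ᵢ ⟨Uᵢ(t), Nᵢ(t)⟩ and Γ(t) = (1/A(t)) ∑ᵢ ⟨Uᵢ(t), J(U_{i+1}(t)) − J(U_{i−1}(t))⟩. Then for all t, (1/A(t)) ∑ᵢ ⟨Uᵢ'(t), Nᵢ(t)⟩ = δ̂'(t) + (A'(t)/A(t)) · δ̂(t) − Γ(t). -/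
/-!
Write `S = ∑ ⟪Uᵢ, Nᵢ⟫`, so that `δ̂ = S / A`. The quotient rule gives `δ̂' + (A'/A) δ̂ = S' / A`,
and the product rule for the inner product together with the normal-evolution law gives
`S' = ∑ ⟪Uᵢ', Nᵢ⟫ + A Γ`.
-/

open scoped RealInnerProductSpace

/-- The planar analogue of `U × k̂`. -/
noncomputable def J (u : EuclideanSpace ℝ (Fin 2)) : EuclideanSpace ℝ (Fin 2) :=
  (WithLp.equiv 2 (Fin 2 → ℝ)).symm ![u 1, -u 0]

theorem deriv_one_div_mul_add_logDeriv_mul {A S : ℝ → ℝ} {t : ℝ}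
    (hA : DifferentiableAt ℝ A t) (hA0 : A t ≠ 0) (hS : DifferentiableAt ℝ S t) :
    deriv (fun s => 1 / A s * S s) t + deriv A t / A t * (1 / A t * S t) =
      1 / A t * deriv S t := by
  have hinv : HasDerivAt (fun s => 1 / A s) (-deriv A t / A t ^ 2) t := by
    simpa only [one_div] using hA.hasDerivAt.fun_inv hA0
  rw [(hinv.fun_mul hS.hasDerivAt).deriv]
  field_simp
  ring

theorem deriv_sum_inner {ι E : Type*} [Fintype ι] [NormedAddCommGroup E]
    [InnerProductSpace ℝ E] {U N : ι → ℝ → E} {t : ℝ}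
    (hU : ∀ i, DifferentiableAt ℝ (U i) t) (hN : ∀ i, DifferentiableAt ℝ (N i) t) :
    deriv (fun s => ∑ i, ⟪U i s, N i s⟫) t =
      ∑ i, ⟪deriv (U i) t, N i t⟫ + ∑ i, ⟪U i t, deriv (N i) t⟫ := by
  rw [deriv_fun_sum fun i _ => (hU i).inner ℝ (hN i), ← Finset.sum_add_distrib]
  exact Finset.sum_congr rfl fun i _ =>
    (deriv_inner_apply ℝ (hU i) (hN i)).trans (add_comm _ _)

/-- Semi-discrete divergence identity: if the edge normal vectors evolve as
`Nᵢ' = J(U_{i+1}) - J(U_{i-1})`, then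
`(1/A) ∑ ⟪Uᵢ', Nᵢ⟫ = δ̂' + (A'/A) δ̂ - Γ` where `δ̂ = (1/A) ∑ ⟪Uᵢ, Nᵢ⟫` and
`Γ = (1/A) ∑ ⟪Uᵢ, J(U_{i+1}) - J(U_{i-1})⟫`. -/
theorem semi_discrete_divergence (n : ℕ) [NeZero n]
    (A : ℝ → ℝ) (hA : Differentiable ℝ A) (hA0 : ∀ t, A t ≠ 0)
    (U N : ZMod n → ℝ → EuclideanSpace ℝ (Fin 2))
    (hU : ∀ i, Differentiable ℝ (U i)) (hN : ∀ i, Differentiable ℝ (N i))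
    (hlaw : ∀ i t, deriv (N i) t = J (U (i + 1) t) - J (U (i - 1) t)) :
    ∀ t : ℝ,
      (1 / A t) * ∑ i : ZMod n, ⟪deriv (U i) t, N i t⟫ =
        deriv (fun s => (1 / A s) * ∑ i : ZMod n, ⟪U i s, N i s⟫) t +
          (deriv A t / A t) * ((1 / A t) * ∑ i : ZMod n, ⟪U i t, N i t⟫) -
          (1 / A t) * ∑ i : ZMod n, ⟪U i t, J (U (i + 1) t) - J (U (i - 1) t)⟫ := by
  intro t
  have hUt i := (hU i).differentiableAt (x := t)
  have hNt i := (hN i).differentiableAt (x := t)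
  have hS := deriv_sum_inner hUt hNt
  simp only [hlaw] at hS
  have hδ := deriv_one_div_mul_add_logDeriv_mul (S := fun s => ∑ i, ⟪U i s, N i s⟫)
    hA.differentiableAt (hA0 t) (DifferentiableAt.fun_sum fun i _ => (hUt i).inner ℝ (hNt i))
  rw [hS] at hδ
  linear_combination -hδ
end

section
/- Let f₀ be a real constant and let ζ, h, δ : ℝ → ℝ with ζ and h differentiable, h(t) ≠ 0 for all t, ζ'(t) = −(ζ(t) + f₀)·δ(t), and h'(t) = −h(t)·δ(t). Then the potential vorticity (ζ(t) + f₀)/h(t) is constant in time; equivalently its derivative is identically zero. -/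
/-! Absolute vorticity `ζ + f₀` and thickness `h` solve the same linear equation `x' = -δ x`,
and by the quotient rule the ratio of two solutions of one linear equation has zero derivative. -/

theorem hasDerivAt_div_zero_of_same_rate {u v : ℝ → ℝ} {r x : ℝ}
    (hu : HasDerivAt u (r * u x) x) (hv : HasDerivAt v (r * v x) x) (hv0 : v x ≠ 0) :
    HasDerivAt (fun s => u s / v s) 0 x :=
  (hu.fun_div hv hv0).congr_deriv (by ring)

/-- Semi-discrete potential vorticity conservation: if `ζ' = -(ζ + f₀) δ` and
`h' = -h δ` with `h` never vanishing, then the potential vorticity `(ζ + f₀)/h`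
is constant in time; equivalently its derivative is identically zero. -/
theorem potential_vorticity_conservation (f₀ : ℝ) (ζ h δ : ℝ → ℝ)
    (hζ : Differentiable ℝ ζ) (hh : Differentiable ℝ h)
    (hh0 : ∀ t, h t ≠ 0)
    (hvort : ∀ t, deriv ζ t = -(ζ t + f₀) * δ t)
    (hmass : ∀ t, deriv h t = -h t * δ t) :
    (∀ s t : ℝ, (ζ s + f₀) / h s = (ζ t + f₀) / h t) ∧
      (∀ t : ℝ, deriv (fun s => (ζ s + f₀) / h s) t = 0) := by
  have hpv (t : ℝ) : HasDerivAt (fun s => (ζ s + f₀) / h s) 0 t := by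
    have habs : HasDerivAt (fun s => ζ s + f₀) (-δ t * (ζ t + f₀)) t :=
      ((hζ t).hasDerivAt.add_const f₀).congr_deriv (by rw [hvort]; ring)
    have hthick : HasDerivAt h (-δ t * h t) t :=
      (hh t).hasDerivAt.congr_deriv (by rw [hmass]; ring)
    exact hasDerivAt_div_zero_of_same_rate habs hthick (hh0 t)
  have hderiv (t : ℝ) : deriv (fun s => (ζ s + f₀) / h s) t = 0 := (hpv t).deriv
  exact ⟨is_const_of_deriv_eq_zero (fun t => (hpv t).differentiableAt) hderiv, hderiv⟩
end

section
/- Let N ≥ 1, let m : Fin N → ℝ with mₐ > 0 for all α, let f₀ ∈ ℝ, let J : ℝ² → ℝ² be the rotation J(u₁,u₂) = (u₂, −u₁), and let V : (Fin N → ℝ²) → ℝ be differentiable. Suppose X, U : ℝ → (Fin N → ℝ²) are differentiable with X'(t) = U(t) and, for each particle α, mₐ • Uₐ'(t) = −(∇V(X(t)))ₐ − (f₀ mₐ) • J(Uₐ(t)). Then the total energy E(t) = (1/2) ∑ₐ mₐ ‖Uₐ(t)‖² + V(X(t)) is constant in t. -/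
open scoped RealInnerProductSpace

/-!
Along a solution the kinetic energy changes at the rate `∑ₐ ⟪Uₐ, mₐ Uₐ'⟫`, the power of the
forces. The power `-⟪∇V(X), U⟫` of the potential force cancels the rate of change
`⟪∇V(X), X'⟫` of `V ∘ X` because `X' = U`, and the Coriolis force is gyroscopic: it is
orthogonal to the velocity, since `J` rotates by a right angle, so it does no work.
-/

lemma inner_J_eq_zero (u : EuclideanSpace ℝ (Fin 2)) : ⟪u, J u⟫ = 0 := by
  simp only [J, PiLp.inner_apply, Fin.sum_univ_two, WithLp.equiv_symm_apply,
    Matrix.cons_val_zero, Matrix.cons_val_one, RCLike.inner_apply, conj_trivial]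
  ring

lemma HasGradientAt.comp_hasDerivAt {F : Type*} [NormedAddCommGroup F] [InnerProductSpace ℝ F]
    [CompleteSpace F] {V : F → ℝ} {g : F} {X : ℝ → F} {v : F} {t : ℝ}
    (hV : HasGradientAt V g (X t)) (hX : HasDerivAt X v t) :
    HasDerivAt (V ∘ X) ⟪g, v⟫ t := by
  simpa only [InnerProductSpace.toDual_apply_apply] using hV.hasFDerivAt.comp_hasDerivAt t hX

section Particles

variable {ι : Type*} [Fintype ι] {E : ι → Type*} [∀ i, NormedAddCommGroup (E i)]
  [∀ i, InnerProductSpace ℝ (E i)]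

noncomputable def kineticEnergy (m : ι → ℝ) (u : PiLp 2 E) : ℝ :=
  (1 / 2) * ∑ i, m i * ‖u i‖ ^ 2

lemma HasDerivAt.kineticEnergy (m : ι → ℝ) {U : ℝ → PiLp 2 E} {U' : PiLp 2 E} {t : ℝ}
    (hU : HasDerivAt U U' t) :
    HasDerivAt (fun s => kineticEnergy m (U s)) (∑ i, m i * ⟪U t i, U' i⟫) t := by
  have hUi (i : ι) : HasDerivAt (fun s => U s i) (U' i) t :=
    (PiLp.hasFDerivAt_apply 2 (U t) i).comp_hasDerivAt t hU
  have hsum := HasDerivAt.fun_sum (u := Finset.univ) fun i _ => (hUi i).norm_sq.const_mul (m i)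
  refine (hsum.const_mul (1 / 2)).congr_deriv ?_
  rw [Finset.mul_sum]
  exact Finset.sum_congr rfl fun i _ => by ring

lemma sum_mul_inner_eq_neg_inner_of_smul_eq {m : ι → ℝ} {u a g : PiLp 2 E} {F : ∀ i, E i}
    (hF : ∀ i, ⟪u i, F i⟫ = 0) (h : ∀ i, m i • a i = -g i - F i) :
    ∑ i, m i * ⟪u i, a i⟫ = -⟪g, u⟫ := by
  rw [PiLp.inner_apply, ← Finset.sum_neg_distrib]
  refine Finset.sum_congr rfl fun i _ => ?_
  rw [← real_inner_smul_right, h i, inner_sub_right, inner_neg_right, hF i, real_inner_comm]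
  ring

variable [∀ i, CompleteSpace (E i)]

theorem kineticEnergy_add_potential_eq_of_gyroscopic (m : ι → ℝ) {V : PiLp 2 E → ℝ}
    (hV : Differentiable ℝ V) {X U : ℝ → PiLp 2 E} (hX : Differentiable ℝ X)
    (hU : Differentiable ℝ U) (hXeq : ∀ t, deriv X t = U t) (G : ℝ → ∀ i, E i)
    (hG : ∀ t i, ⟪U t i, G t i⟫ = 0)
    (hUeq : ∀ i t, m i • deriv U t i = -gradient V (X t) i - G t i) (s t : ℝ) :
    kineticEnergy m (U s) + V (X s) = kineticEnergy m (U t) + V (X t) := by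
  have hE (t : ℝ) : HasDerivAt (fun s => kineticEnergy m (U s) + V (X s)) 0 t := by
    have hXt : HasDerivAt X (U t) t := by
      rw [← hXeq t]
      exact (hX t).hasDerivAt
    refine ((hU t).hasDerivAt.kineticEnergy m).add
      ((hV (X t)).hasGradientAt.comp_hasDerivAt hXt) |>.congr_deriv ?_
    rw [sum_mul_inner_eq_neg_inner_of_smul_eq (hG t) (hUeq · t), neg_add_cancel]
  exact is_const_of_deriv_eq_zero (fun t => (hE t).differentiableAt) (fun t => (hE t).deriv) s t

end Particles

theorem vfl_energy_conservation_general (N : ℕ)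
    (m : Fin N → ℝ) (f₀ : ℝ)
    (V : PiLp 2 (fun _ : Fin N => EuclideanSpace ℝ (Fin 2)) → ℝ)
    (hV : Differentiable ℝ V)
    (X U : ℝ → PiLp 2 (fun _ : Fin N => EuclideanSpace ℝ (Fin 2)))
    (hX : Differentiable ℝ X) (hU : Differentiable ℝ U)
    (hXeq : ∀ t, deriv X t = U t)
    (hUeq : ∀ (α : Fin N) (t : ℝ),
      m α • (deriv U t) α = -(gradient V (X t)) α - (f₀ * m α) • J ((U t) α)) :
    ∀ s t : ℝ,
      (1 / 2) * ∑ α : Fin N, m α * ‖(U s) α‖ ^ 2 + V (X s) =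
        (1 / 2) * ∑ α : Fin N, m α * ‖(U t) α‖ ^ 2 + V (X t) :=
  kineticEnergy_add_potential_eq_of_gyroscopic m hV hX hU hXeq
    (fun t α => (f₀ * m α) • J (U t α))
    (fun t α => by rw [inner_smul_right, inner_J_eq_zero, mul_zero]) hUeq

/-- Energy conservation for the semi-discrete Euler–Lagrange particle equations of the
variational free-Lagrange method: if `X' = U` and
`mₐ • Uₐ' = -(∇V(X))ₐ - (f₀ mₐ) • J(Uₐ)` for every particle `α`, then the total energy
`E = (1/2) ∑ₐ mₐ ‖Uₐ‖² + V(X)` is constant in time. -/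
theorem vfl_energy_conservation (N : ℕ) (hN : 1 ≤ N)
    (m : Fin N → ℝ) (hm : ∀ α, 0 < m α) (f₀ : ℝ)
    (V : PiLp 2 (fun _ : Fin N => EuclideanSpace ℝ (Fin 2)) → ℝ)
    (hV : Differentiable ℝ V)
    (X U : ℝ → PiLp 2 (fun _ : Fin N => EuclideanSpace ℝ (Fin 2)))
    (hX : Differentiable ℝ X) (hU : Differentiable ℝ U)
    (hXeq : ∀ t, deriv X t = U t)
    (hUeq : ∀ (α : Fin N) (t : ℝ),
      m α • (deriv U t) α = -(gradient V (X t)) α - (f₀ * m α) • J ((U t) α)) :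
    ∀ s t : ℝ,
      (1 / 2) * ∑ α : Fin N, m α * ‖(U s) α‖ ^ 2 + V (X s) =
        (1 / 2) * ∑ α : Fin N, m α * ‖(U t) α‖ ^ 2 + V (X t) :=
  vfl_energy_conservation_general N m f₀ V hV X U hX hU hXeq hUeq
end
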